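/- arXiv:1401.3925 — 10 statements merged into one kernel-verified Lean document; each statement's English description precedes it below -/
import Mathlib

section
/- If C is a q-ary code of length n in which every codeword has Hamming weight w, and for all distinct u, v in C the supports of u and v intersect in at most 2 coordinates, and for each symbol i in {1,...,q-1} the ordered pairs (x,y) with u_x = i, y in supp(u)\{x}, ranging over codewords u in C, are pairwise distinct, then C has minimum Hamming distance at least 2w-2. -/
open Finset

theorem stmt0 (n q w : ℕ) (C : Set (Fin n → ZMod q))
    (hwt : ∀ u ∈ C, (univ.filter (fun x => u x ≠ 0)).card = w)
    (hsupp : ∀ u ∈ C, ∀ v ∈ C, u ≠ v →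
      ((univ.filter (fun x => u x ≠ 0)) ∩ (univ.filter (fun x => v x ≠ 0))).card ≤ 2)
    (hpairs : ∀ u ∈ C, ∀ v ∈ C, ∀ x y : Fin n, x ≠ y →
      u x = v x → u x ≠ 0 → u y ≠ 0 → v y ≠ 0 → u = v) :
    ∀ u ∈ C, ∀ v ∈ C, u ≠ v →
      2 * w - 2 ≤ (univ.filter (fun x => u x ≠ v x)).card := by
  intro u hu v hv huv
  set Su := univ.filter (fun x => u x ≠ 0) with hSu
  set Sv := univ.filter (fun x => v x ≠ 0) with hSv
  set D := univ.filter (fun x => u x ≠ v x) with hD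
  set I := Su ∩ Sv with hI
  set A := (Su ∪ Sv) \ D with hA
  have memA : ∀ x, x ∈ A → u x = v x ∧ u x ≠ 0 ∧ v x ≠ 0 := by
    intro x hx
    simp only [hA, hSu, hSv, hD, mem_sdiff, mem_union, mem_filter, mem_univ,
      true_and, not_not] at hx
    obtain ⟨h1, h2⟩ := hx
    rcases h1 with h | h
    · exact ⟨h2, h, h2 ▸ h⟩
    · exact ⟨h2, h2 ▸ h, h⟩
  have memI : ∀ x, x ∈ I → u x ≠ 0 ∧ v x ≠ 0 := by
    intro x hx
    simp only [hI, hSu, hSv, mem_inter, mem_filter, mem_univ, true_and] at hx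
    exact hx
  have hAI : A ⊆ I := by
    intro x hx
    obtain ⟨_, h2, h3⟩ := memA x hx
    simp only [hI, hSu, hSv, mem_inter, mem_filter, mem_univ, true_and]
    exact ⟨h2, h3⟩
  have key : I.card + A.card ≤ 2 := by
    rcases A.eq_empty_or_nonempty with h | ⟨x, hx⟩
    · simpa [h] using hsupp u hu v hv huv
    · obtain ⟨hxe, hxu, hxv⟩ := memA x hx
      have hIx : I ⊆ {x} := by
        intro y hy
        obtain ⟨hyu, hyv⟩ := memI y hy
        simp only [mem_singleton]
        by_contra hne
        exact huv (hpairs u hu v hv x y (fun h => hne h.symm) hxe hxu hyu hyv)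
      have h1 : I.card ≤ 1 := le_trans (card_le_card hIx) (by simp)
      have h2 : A.card ≤ 1 := le_trans (card_le_card hAI) h1
      omega
  have hunion : Su.card + Sv.card = (Su ∪ Sv).card + I.card :=
    (card_union_add_card_inter Su Sv).symm
  have hDsub : (Su ∪ Sv) \ A ⊆ D := by
    rw [hA, sdiff_sdiff_right_self]
    exact inter_subset_right
  have hcard : (Su ∪ Sv).card - A.card ≤ D.card :=
    le_trans (le_card_sdiff A (Su ∪ Sv)) (card_le_card hDsub)
  have hAle : A.card ≤ (Su ∪ Sv).card := card_le_card (sdiff_subset)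
  have hwu := hwt u hu
  have hwv := hwt v hv
  rw [← hSu] at hwu
  rw [← hSv] at hwv
  omega
end

section
/- If C is a q-ary code of constant weight w and minimum distance at least 2w-2, then for each nonzero symbol i, the ordered pairs (x,y) with u_x = i and y ∈ supp(u)\{x}, taken over all codewords u ∈ C, are pairwise distinct; that is, if u, v ∈ C, u_x = v_x = i, and x ≠ y with y ∈ supp(u) ∩ supp(v), then u = v. -/
open Finset

theorem stmt2 (n q w : ℕ) (C : Set (Fin n → ZMod q))
    (hwt : ∀ u ∈ C, (univ.filter (fun x => u x ≠ 0)).card = w)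
    (hdist : ∀ u ∈ C, ∀ v ∈ C, u ≠ v →
      2 * w - 2 ≤ (univ.filter (fun x => u x ≠ v x)).card) :
    ∀ u ∈ C, ∀ v ∈ C, ∀ i : ZMod q, i ≠ 0 → ∀ x y : Fin n, x ≠ y →
      u x = i → v x = i → u y ≠ 0 → v y ≠ 0 → u = v := by
  intro u hu v hv i hi x y hxy hux hvx huy hvy
  by_contra hne
  have hD := hdist u hu v hv hne
  set Su := univ.filter (fun z => u z ≠ 0) with hSu
  set Sv := univ.filter (fun z => v z ≠ 0) with hSv
  set D := univ.filter (fun z => u z ≠ v z) with hDdef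
  have hsub : D ⊆ (Su ∪ Sv) \ {x} := by
    intro z hz
    simp only [hDdef, mem_filter, mem_univ, true_and] at hz
    simp only [mem_sdiff, mem_union, hSu, hSv, mem_filter, mem_univ, true_and,
      mem_singleton]
    constructor
    · by_contra h
      push_neg at h
      rw [h.1, h.2] at hz
      exact hz rfl
    · rintro rfl
      rw [hux, hvx] at hz
      exact hz rfl
  have hxy2 : ({x, y} : Finset (Fin n)) ⊆ Su ∩ Sv := by
    intro z hz
    simp only [mem_insert, mem_singleton] at hz
    simp only [mem_inter, hSu, hSv, mem_filter, mem_univ, true_and]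
    rcases hz with rfl | rfl
    · exact ⟨by rw [hux]; exact hi, by rw [hvx]; exact hi⟩
    · exact ⟨huy, hvy⟩
  have hcard2 : 2 ≤ (Su ∩ Sv).card := by
    have := card_le_card hxy2
    rwa [card_insert_of_notMem (by simpa using hxy), card_singleton] at this
  have hw2 : 2 ≤ w := by
    have h1 : Su.card = w := hwt u hu
    have := card_le_card (inter_subset_left (s₁ := Su) (s₂ := Sv))
    omega
  have hx : x ∈ Su ∪ Sv := by
    simp [hSu, mem_union, mem_filter, hux, hi]
  have hunion : (Su ∪ Sv).card ≤ 2 * w - 2 := by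
    have := card_union_add_card_inter Su Sv
    have h1 : Su.card = w := hwt u hu
    have h2 : Sv.card = w := hwt v hv
    omega
  have hDcard : D.card ≤ 2 * w - 3 := by
    have := card_le_card hsub
    have hsd : ((Su ∪ Sv) \ {x}).card = (Su ∪ Sv).card - 1 := by
      rw [card_sdiff_of_subset (by simpa using hx), card_singleton]
    have hpos : 1 ≤ (Su ∪ Sv).card := card_pos.mpr ⟨x, hx⟩
    omega
  omega
end

section
/- If C is a q-ary code of constant weight w such that: (C3) for all nonzero symbols i, j, the ordered pairs (x,y) with x ≠ y, u_x = i, u_y = j over codewords u ∈ C are pairwise distinct (i.e., if u,v ∈ C, x ≠ y, u_x = v_x ≠ 0 and u_y = v_y ≠ 0, then u = v), and (C4) for all distinct u, v ∈ C, |supp(u) ∩ supp(v)| ≤ 2, then C has minimum distance at least 2w-3. -/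
open Finset

theorem stmt3 (n q w : ℕ) (C : Set (Fin n → ZMod q))
    (hwt : ∀ u ∈ C, (univ.filter (fun x => u x ≠ 0)).card = w)
    (hC3 : ∀ u ∈ C, ∀ v ∈ C, ∀ x y : Fin n, x ≠ y →
      u x = v x → u x ≠ 0 → u y = v y → u y ≠ 0 → u = v)
    (hC4 : ∀ u ∈ C, ∀ v ∈ C, u ≠ v →
      ((univ.filter (fun x => u x ≠ 0)) ∩ (univ.filter (fun x => v x ≠ 0))).card ≤ 2) :
    ∀ u ∈ C, ∀ v ∈ C, u ≠ v →
      2 * w - 3 ≤ (univ.filter (fun x => u x ≠ v x)).card := by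
  intro u hu v hv huv
  set S := univ.filter (fun x => u x ≠ 0) with hSdef
  set T := univ.filter (fun x => v x ≠ 0) with hTdef
  set D := univ.filter (fun x => u x ≠ v x) with hDdef
  have hS : S.card = w := hwt u hu
  have hT : T.card = w := hwt v hv
  have hm : (S ∩ T).card ≤ 2 := hC4 u hu v hv huv
  have hmw : (S ∩ T).card ≤ w := hS ▸ card_le_card inter_subset_left
  set K := (S ∩ T).filter (fun x => u x ≠ v x) with hKdef
  -- (S \ T) ∪ (T \ S) ∪ K ⊆ D, pairwise disjoint
  have hsub : (S \ T) ∪ (T \ S) ∪ K ⊆ D := by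
    intro x hx
    simp only [hSdef, hTdef, hKdef, hDdef, mem_union, mem_sdiff, mem_inter,
      mem_filter, mem_univ, true_and] at hx ⊢
    rcases hx with (⟨h1, h2⟩ | ⟨h1, h2⟩) | ⟨_, h⟩
    · intro h; exact h2 (h ▸ h1)
    · intro h; exact h2 (h ▸ h1)
    · exact h
  have hd1 : Disjoint (S \ T) (T \ S) := disjoint_sdiff_sdiff
  have hd2 : Disjoint ((S \ T) ∪ (T \ S)) K := by
    apply Finset.disjoint_left.mpr
    intro x hx hxK
    have hxST : x ∈ S ∩ T := mem_of_mem_filter x hxK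
    rcases mem_union.mp hx with h | h
    · exact (mem_sdiff.mp h).2 (mem_inter.mp hxST).2
    · exact (mem_sdiff.mp h).2 (mem_inter.mp hxST).1
  have hcard : (S \ T).card + (T \ S).card + K.card ≤ D.card := by
    calc (S \ T).card + (T \ S).card + K.card
        = ((S \ T) ∪ (T \ S)).card + K.card := by rw [card_union_of_disjoint hd1]
      _ = ((S \ T) ∪ (T \ S) ∪ K).card := (card_union_of_disjoint hd2).symm
      _ ≤ D.card := card_le_card hsub
  have hST : (S ∩ T).card + (S \ T).card = S.card := card_inter_add_card_sdiff S T
  have hTS : (T ∩ S).card + (T \ S).card = T.card := card_inter_add_card_sdiff T S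
  rw [inter_comm] at hTS
  -- if common support has size 2, there must be a disagreement there
  have hk : (S ∩ T).card = 2 → 1 ≤ K.card := by
    intro h2
    rcases Finset.card_pos.mp (by omega : 0 < (S ∩ T).card) with ⟨x, hx⟩
    by_contra hk0
    have hKe : K = ∅ := card_eq_zero.mp (by omega)
    have hagree : ∀ z ∈ S ∩ T, u z = v z := by
      intro z hz
      by_contra hne
      have : z ∈ K := mem_filter.mpr ⟨hz, hne⟩
      simp [hKe] at this
    obtain ⟨y, hy, hxy⟩ := Finset.exists_mem_ne (show 1 < (S ∩ T).card by omega) x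
    have hxS : u x ≠ 0 := (mem_filter.mp (mem_inter.mp hx).1).2
    have hyS : u y ≠ 0 := (mem_filter.mp (mem_inter.mp hy).1).2
    exact huv (hC3 u hu v hv x y (Ne.symm hxy) (hagree x hx) hxS (hagree y hy) hyS)
  omega
end

section
/- The maximum size of a q-ary code of length n, constant weight w, and minimum Hamming distance at least 2w equals ⌊n/w⌋ (for 1 ≤ w ≤ n and q ≥ 2). -/
open Finset

/-- Hamming distance between two words. -/
def hdist {n q : ℕ} (u v : Fin n → ZMod q) : ℕ :=
  (univ.filter (fun x => u x ≠ v x)).card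

/-- Hamming weight of a word. -/
def wt {n q : ℕ} (u : Fin n → ZMod q) : ℕ :=
  (univ.filter (fun x => u x ≠ 0)).card

theorem stmt4 (q n w : ℕ) (hq : 2 ≤ q) (hw : 1 ≤ w) (hwn : w ≤ n) :
    IsGreatest {k : ℕ | ∃ C : Finset (Fin n → ZMod q),
      (∀ u ∈ C, wt u = w) ∧
      (∀ u ∈ C, ∀ v ∈ C, u ≠ v → 2 * w ≤ hdist u v) ∧
      C.card = k} (n / w) := by
  classical
  haveI : Fact (1 < q) := ⟨hq⟩
  constructor
  · -- construction
    set m := n / w with hm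
    have hbound : ∀ i : Fin m, (i.val + 1) * w ≤ n := by
      intro i
      calc (i.val + 1) * w ≤ m * w := Nat.mul_le_mul_right _ i.is_lt
        _ ≤ n := Nat.div_mul_le_self n w
    have hlt : ∀ (i : Fin m), ∀ x ∈ Finset.Ico (i.val * w) ((i.val + 1) * w), x < n :=
      fun i x hx => lt_of_lt_of_le (Finset.mem_Ico.mp hx).2 (hbound i)
    let u : Fin m → Fin n → ZMod q := fun i x =>
      if i.val * w ≤ x.val ∧ x.val < (i.val + 1) * w then 1 else 0
    have huval : ∀ (i : Fin m) (x : Fin n),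
        u i x = if i.val * w ≤ x.val ∧ x.val < (i.val + 1) * w then 1 else 0 := fun _ _ => rfl
    have hIdisj : ∀ i j : Fin m, i ≠ j →
        Disjoint (Finset.Ico (i.val * w) ((i.val + 1) * w))
          (Finset.Ico (j.val * w) ((j.val + 1) * w)) := by
      intro i j hij
      rw [Finset.disjoint_left]
      intro x hx hx'
      rw [Finset.mem_Ico] at hx hx'
      have : i.val ≠ j.val := fun h => hij (Fin.ext h)
      rcases this.lt_or_gt with h | h
      · have : (i.val + 1) * w ≤ j.val * w := Nat.mul_le_mul_right _ h
        omega
      · have : (j.val + 1) * w ≤ i.val * w := Nat.mul_le_mul_right _ h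
        omega
    have hsupp : ∀ i : Fin m, (univ.filter (fun x => u i x ≠ 0)) =
        (Finset.Ico (i.val * w) ((i.val + 1) * w)).attachFin (hlt i) := by
      intro i
      ext x
      simp only [mem_filter, mem_univ, true_and, Finset.mem_attachFin, Finset.mem_Ico, huval]
      split_ifs with h
      · simp [h]
      · simp [h]
    have hwt : ∀ i : Fin m, wt (u i) = w := by
      intro i
      rw [wt, hsupp i, Finset.card_attachFin, Nat.card_Ico]
      have : (i.val + 1) * w = i.val * w + w := by ring
      omega
    have hinj : Function.Injective u := by
      intro i j hij
      by_contra hne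
      have hsm : (i.val + 1) * w = i.val * w + w := by ring
      have hx : i.val * w < n := lt_of_lt_of_le (by omega) (hbound i)
      have h1 : u i ⟨i.val * w, hx⟩ = 1 := by
        rw [huval, if_pos ⟨le_refl _, by simp; omega⟩]
      have h2 : u j ⟨i.val * w, hx⟩ = 0 := by
        rw [huval]
        rw [if_neg]
        intro h
        exact Finset.disjoint_left.mp (hIdisj i j hne)
          (Finset.mem_Ico.mpr ⟨le_refl _, by omega⟩) (Finset.mem_Ico.mpr h)
      
      rw [hij] at h1
      rw [h1] at h2
      exact one_ne_zero h2
    have hdistlb : ∀ i j : Fin m, i ≠ j → 2 * w ≤ hdist (u i) (u j) := by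
      intro i j hij
      have hsub : ((Finset.Ico (i.val * w) ((i.val + 1) * w)).attachFin (hlt i)) ∪
          ((Finset.Ico (j.val * w) ((j.val + 1) * w)).attachFin (hlt j)) ⊆
          univ.filter (fun x => u i x ≠ u j x) := by
        intro x hx
        rw [Finset.mem_union, Finset.mem_attachFin, Finset.mem_attachFin] at hx
        rw [mem_filter]
        refine ⟨mem_univ _, ?_⟩
        rcases hx with hx | hx
        · have h1 : u i x = 1 := by
            rw [huval, if_pos (Finset.mem_Ico.mp hx)]
          have h2 : u j x = 0 := by
            rw [huval, if_neg]
            intro h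
            exact Finset.disjoint_left.mp (hIdisj i j hij) hx (Finset.mem_Ico.mpr h)
          rw [h1, h2]; exact one_ne_zero
        · have h1 : u j x = 1 := by
            rw [huval, if_pos (Finset.mem_Ico.mp hx)]
          have h2 : u i x = 0 := by
            rw [huval, if_neg]
            intro h
            exact Finset.disjoint_left.mp (hIdisj i j hij) (Finset.mem_Ico.mpr h) hx
          rw [h1, h2]
          exact (one_ne_zero).symm
      have hdisj' : Disjoint ((Finset.Ico (i.val * w) ((i.val + 1) * w)).attachFin (hlt i))
          ((Finset.Ico (j.val * w) ((j.val + 1) * w)).attachFin (hlt j)) := by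
        rw [Finset.disjoint_left]
        intro x hx hx'
        rw [Finset.mem_attachFin] at hx hx'
        exact Finset.disjoint_left.mp (hIdisj i j hij) hx hx'
      have hcard := Finset.card_le_card hsub
      rw [Finset.card_union_of_disjoint hdisj', Finset.card_attachFin,
        Finset.card_attachFin, Nat.card_Ico, Nat.card_Ico] at hcard
      have e1 : (i.val + 1) * w = i.val * w + w := by ring
      have e2 : (j.val + 1) * w = j.val * w + w := by ring
      calc 2 * w = ((i.val + 1) * w - i.val * w) + ((j.val + 1) * w - j.val * w) := by
            omega
        _ ≤ _ := hcard
      -- hdist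
    refine ⟨Finset.image u univ, ?_, ?_, ?_⟩
    · intro v hv
      rw [Finset.mem_image] at hv
      obtain ⟨i, _, rfl⟩ := hv
      exact hwt i
    · intro a ha b hb hab
      rw [Finset.mem_image] at ha hb
      obtain ⟨i, _, rfl⟩ := ha
      obtain ⟨j, _, rfl⟩ := hb
      exact hdistlb i j (fun h => hab (by rw [h]))
    · rw [Finset.card_image_of_injective _ hinj, Finset.card_univ, Fintype.card_fin]
  · -- upper bound
    rintro k ⟨C, hwtC, hdC, rfl⟩
    set S : (Fin n → ZMod q) → Finset (Fin n) := fun v => univ.filter (fun x => v x ≠ 0)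
      with hS
    have hdisj : ∀ a ∈ C, ∀ b ∈ C, a ≠ b → Disjoint (S a) (S b) := by
      intro a ha b hb hab
      by_contra hnd
      rw [Finset.not_disjoint_iff] at hnd
      obtain ⟨x, hxa, hxb⟩ := hnd
      have hinter : 1 ≤ (S a ∩ S b).card :=
        Finset.card_pos.mpr ⟨x, Finset.mem_inter.mpr ⟨hxa, hxb⟩⟩
      have hsub : univ.filter (fun x => a x ≠ b x) ⊆ S a ∪ S b := by
        intro y hy
        rw [mem_filter] at hy
        rw [Finset.mem_union, hS]
        simp only [mem_filter, mem_univ, true_and]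
        by_contra hc
        push_neg at hc
        rw [hc.1, hc.2] at hy
        exact hy.2 rfl
      have h1 : 2 * w ≤ (S a ∪ S b).card :=
        le_trans (hdC a ha b hb hab) (Finset.card_le_card hsub)
      have h2 : (S a ∪ S b).card + (S a ∩ S b).card = (S a).card + (S b).card :=
        Finset.card_union_add_card_inter _ _
      have hwa : (S a).card = w := hwtC a ha
      have hwb : (S b).card = w := hwtC b hb
      omega
    have hb : C.card * w ≤ n := by
      have := Finset.card_biUnion hdisj
      have hsum : ∑ a ∈ C, (S a).card = C.card * w := by
        have h : ∀ a ∈ C, (S a).card = w := fun a ha => hwtC a ha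
        calc ∑ a ∈ C, (S a).card = ∑ _a ∈ C, w := Finset.sum_congr rfl h
          _ = C.card * w := by rw [Finset.sum_const, smul_eq_mul]
      have hle : (C.biUnion S).card ≤ n := by
        calc (C.biUnion S).card ≤ Fintype.card (Fin n) := Finset.card_le_univ _
          _ = n := Fintype.card_fin n
      omega
    rw [Nat.le_div_iff_mul_le (by omega : 0 < w)]
    exact hb
end

section
/- Any q-ary code of length n, constant weight w, minimum distance at least 2w, and constant composition w̄ = [w_1,...,w_{q-1}] (with all w_i > 0 and Σ w_i = w ≥ 1) has size at most ⌊n/w⌋, and this bound is attained. -/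
open Finset

/-!
Two words of weight `w` at distance at least `2w` have disjoint supports, so at most `n / w`
of them fit into `n` coordinates. Conversely, extending one word of composition `w̄` by zero
along `⌊n/w⌋` disjoint blocks of `w` coordinates gives a code attaining the bound.
-/

open Function

section Support

variable {ι β : Type*} [Fintype ι] [DecidableEq β] [Zero β]

def hammingSupport (x : ι → β) : Finset ι := {i | x i ≠ 0}

theorem card_hammingSupport (x : ι → β) : #(hammingSupport x) = hammingNorm x := rfl

theorem hammingDist_add_card_inter_le [DecidableEq ι] (x y : ι → β) :
    hammingDist x y + #(hammingSupport x ∩ hammingSupport y) ≤ hammingNorm x + hammingNorm y := by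
  have hsub : ({i | x i ≠ y i} : Finset ι) ⊆ hammingSupport x ∪ hammingSupport y := by
    intro i
    simp only [hammingSupport, mem_filter, mem_univ, true_and, mem_union]
    contrapose!
    rintro ⟨hx, hy⟩
    rw [hx, hy]
  rw [← card_hammingSupport, ← card_hammingSupport, ← card_union_add_card_inter]
  exact Nat.add_le_add_right (card_le_card hsub) _

theorem disjoint_hammingSupport_of_le_hammingDist [DecidableEq ι] {x y : ι → β}
    (h : hammingNorm x + hammingNorm y ≤ hammingDist x y) :
    Disjoint (hammingSupport x) (hammingSupport y) := by
  have := hammingDist_add_card_inter_le x y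
  rw [disjoint_iff_inter_eq_empty, ← card_eq_zero]
  omega

theorem hammingDist_eq_of_disjoint [DecidableEq ι] {x y : ι → β}
    (h : Disjoint (hammingSupport x) (hammingSupport y)) :
    hammingDist x y = hammingNorm x + hammingNorm y := by
  have heq : ({i | x i ≠ y i} : Finset ι) = hammingSupport x ∪ hammingSupport y := by
    ext i
    have hi : ¬(x i ≠ 0 ∧ y i ≠ 0) := fun hxy =>
      disjoint_left.1 h (by simpa [hammingSupport] using hxy.1)
        (by simpa [hammingSupport] using hxy.2)
    simp only [hammingSupport, mem_filter, mem_univ, true_and, mem_union]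
    grind
  rw [hammingDist, heq, card_union_of_disjoint h, card_hammingSupport, card_hammingSupport]

theorem card_mul_le_of_le_hammingDist {C : Finset (ι → β)} {w : ℕ}
    (hwt : ∀ u ∈ C, hammingNorm u = w)
    (hd : ∀ u ∈ C, ∀ v ∈ C, u ≠ v → 2 * w ≤ hammingDist u v) :
    #C * w ≤ Fintype.card ι := by
  classical
  have hdisj : (C : Set (ι → β)).PairwiseDisjoint hammingSupport := fun u hu v hv huv =>
    disjoint_hammingSupport_of_le_hammingDist <| by
      have := hd u hu v hv huv
      rw [hwt u hu, hwt v hv]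
      omega
  calc #C * w = ∑ u ∈ C, hammingNorm u := by rw [sum_congr rfl hwt, sum_const, smul_eq_mul]
    _ = #(C.biUnion hammingSupport) := (card_biUnion hdisj).symm
    _ ≤ Fintype.card ι := card_le_univ _

end Support

section ExtendByZero

variable {α ι β : Type*} [Fintype α] [Fintype ι] [DecidableEq ι] [Zero β]
  {f : α → ι}

theorem filter_extend_zero_eq_map (hf : Injective f) (p : α → β) (Q : β → Prop)
    [DecidablePred Q] (hQ : ¬Q 0) :
    ({i | Q (extend f p 0 i)} : Finset ι) = ({a | Q (p a)} : Finset α).map ⟨f, hf⟩ := by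
  ext i
  simp only [mem_filter, mem_univ, true_and, mem_map, Embedding.coeFn_mk]
  by_cases hi : ∃ a, f a = i
  · obtain ⟨a, rfl⟩ := hi
    simp [hf.extend_apply, hf.eq_iff]
  · simp only [extend_apply' _ _ _ hi, Pi.zero_apply, hQ, false_iff]
    exact fun ⟨a, _, ha⟩ => hi ⟨a, ha⟩

theorem card_filter_extend_zero (hf : Injective f) (p : α → β) (Q : β → Prop)
    [DecidablePred Q] (hQ : ¬Q 0) :
    #({i | Q (extend f p 0 i)} : Finset ι) = #({a | Q (p a)} : Finset α) := by
  rw [filter_extend_zero_eq_map hf p Q hQ, card_map]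

theorem hammingSupport_extend_zero_subset [DecidableEq β] (hf : Injective f) (p : α → β) :
    hammingSupport (extend f p 0) ⊆ univ.map ⟨f, hf⟩ := by
  rw [hammingSupport, filter_extend_zero_eq_map hf p (· ≠ 0) (not_not.2 rfl)]
  exact map_subset_map.2 (subset_univ _)

end ExtendByZero

section Construction

variable {α ι β : Type*} [Fintype α] [Fintype ι] [DecidableEq ι] [DecidableEq β] [Zero β]

theorem exists_code_of_pattern [Nonempty α] (p : α → β) (hp : ∀ a, p a ≠ 0) {m : ℕ}
    (hm : m * Fintype.card α ≤ Fintype.card ι) :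
    ∃ C : Finset (ι → β), #C = m ∧
      (∀ u ∈ C, hammingNorm u = Fintype.card α) ∧
      (∀ u ∈ C, ∀ b ≠ 0, #{i | u i = b} = #{a | p a = b}) ∧
      (∀ u ∈ C, ∀ v ∈ C, u ≠ v → hammingDist u v = 2 * Fintype.card α) := by
  obtain ⟨e⟩ : Nonempty (Fin m × α ↪ ι) :=
    Embedding.nonempty_of_card_le (by simpa using hm)
  have he (k : Fin m) : Injective (fun a => e (k, a)) := fun a b h =>
    (Prod.ext_iff.1 (e.injective h)).2
  let c (k : Fin m) : ι → β := extend (fun a => e (k, a)) p 0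
  have hnorm (k : Fin m) : hammingNorm (c k) = Fintype.card α := by
    rw [hammingNorm, card_filter_extend_zero (he k) p (· ≠ 0) (not_not.2 rfl)]
    simp [hp]
  have hsep {k l : Fin m} (hkl : k ≠ l) : hammingDist (c k) (c l) = 2 * Fintype.card α := by
    rw [hammingDist_eq_of_disjoint, hnorm, hnorm, two_mul]
    refine Disjoint.mono (hammingSupport_extend_zero_subset (he k) p)
      (hammingSupport_extend_zero_subset (he l) p) ?_
    simp only [disjoint_left, mem_map, mem_univ, true_and, Embedding.coeFn_mk]
    rintro _ ⟨a, rfl⟩ ⟨b, hb⟩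
    exact hkl (congrArg Prod.fst (e.injective hb)).symm
  have hc : Injective c := fun k l hkl => by
    by_contra h
    have := hsep h
    rw [hkl, hammingDist_self] at this
    have := Fintype.card_pos (α := α)
    omega
  refine ⟨univ.image c, by rw [card_image_of_injective _ hc, card_fin], ?_, ?_, ?_⟩ <;>
    simp only [mem_image, mem_univ, true_and, forall_exists_index, forall_apply_eq_imp_iff]
  · exact hnorm
  · exact fun k b hb => card_filter_extend_zero (he k) p (· = b) (Ne.symm hb)
  · exact fun k l hkl => hsep (fun h => hkl (h ▸ rfl))

end Construction

theorem card_filter_sigma_fst_eq {κ : Type*} [Fintype κ] [DecidableEq κ] (m : κ → ℕ) (k : κ) :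
    #({s : Σ k, Fin (m k) | s.1 = k} : Finset _) = m k := by
  have : ({s : Σ k, Fin (m k) | s.1 = k} : Finset _) = univ.map (Embedding.sigmaMk k) := by
    ext ⟨l, j⟩
    simp only [mem_filter, mem_univ, true_and, mem_map, Embedding.sigmaMk_apply]
    constructor
    · rintro rfl; exact ⟨j, rfl⟩
    · rintro ⟨a, h⟩; exact (congrArg Sigma.fst h).symm
  rw [this, card_map, card_univ, Fintype.card_fin]

theorem natCast_zmod_inj_of_lt {q a b : ℕ} (ha : a < q) (hb : b < q) :
    (a : ZMod q) = b ↔ a = b := by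
  rw [ZMod.natCast_eq_natCast_iff', Nat.mod_eq_of_lt ha, Nat.mod_eq_of_lt hb]

theorem natCast_zmod_ne_zero_of_lt {q a : ℕ} (h0 : a ≠ 0) (ha : a < q) : (a : ZMod q) ≠ 0 := by
  rwa [Ne, ← Nat.cast_zero, natCast_zmod_inj_of_lt ha (by omega)]

theorem stmt5_general (q n : ℕ) (wb : ℕ → ℕ)
    (w : ℕ) (hw : w = ∑ i ∈ Finset.Icc 1 (q - 1), wb i) (hw1 : 1 ≤ w) :
    (∀ C : Finset (Fin n → ZMod q),
      (∀ u ∈ C, wt u = w) →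
      (∀ u ∈ C, ∀ i, 1 ≤ i → i ≤ q - 1 →
        (univ.filter (fun x => u x = (i : ZMod q))).card = wb i) →
      (∀ u ∈ C, ∀ v ∈ C, u ≠ v → 2 * w ≤ hdist u v) →
      C.card ≤ n / w) ∧
    (∃ C : Finset (Fin n → ZMod q),
      (∀ u ∈ C, wt u = w) ∧
      (∀ u ∈ C, ∀ i, 1 ≤ i → i ≤ q - 1 →
        (univ.filter (fun x => u x = (i : ZMod q))).card = wb i) ∧
      (∀ u ∈ C, ∀ v ∈ C, u ≠ v → 2 * w ≤ hdist u v) ∧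
      C.card = n / w) := by
  refine ⟨fun C hwt _ hd => ?_, ?_⟩
  · rw [Nat.le_div_iff_mul_le hw1]
    simpa only [Fintype.card_fin] using card_mul_le_of_le_hammingDist hwt hd
  -- the letter `i` of the pattern sits at the `wb i` positions `⟨i, _⟩`
  let α := Σ i : Icc 1 (q - 1), Fin (wb i)
  have hα : Fintype.card α = w := by simp [α, hw, sum_attach]
  have : Nonempty α := Fintype.card_pos_iff.1 (hα ▸ hw1)
  have hlt {i : ℕ} (hi : i ∈ Icc 1 (q - 1)) : i < q := by rw [mem_Icc] at hi; omega
  have hne {i : ℕ} (hi : i ∈ Icc 1 (q - 1)) : (i : ZMod q) ≠ 0 :=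
    natCast_zmod_ne_zero_of_lt (by rw [mem_Icc] at hi; omega) (hlt hi)
  obtain ⟨C, hcard, hnorm, hcomp, hsep⟩ := exists_code_of_pattern (ι := Fin n)
    (fun s : α => ((s.1 : ℕ) : ZMod q)) (fun s => hne s.1.2) (m := n / w)
    (by simpa [hα] using Nat.div_mul_le_self n w)
  refine ⟨C, fun u hu => (hnorm u hu).trans hα, fun u hu i hi1 hi2 => ?_,
    fun u hu v hv huv => (hsep u hu v hv huv).trans_ge (by rw [hα]), hcard⟩
  have hi : i ∈ Icc 1 (q - 1) := mem_Icc.2 ⟨hi1, hi2⟩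
  rw [hcomp u hu _ (hne hi), filter_congr (q := fun s : α => s.1 = ⟨i, hi⟩) fun s _ => by
    rw [natCast_zmod_inj_of_lt (hlt s.1.2) (hlt hi), Subtype.ext_iff]]
  exact card_filter_sigma_fst_eq (fun j : Icc 1 (q - 1) => wb j) ⟨i, hi⟩

theorem stmt5 (q n : ℕ) (hq : 2 ≤ q) (wb : ℕ → ℕ)
    (hpos : ∀ i, 1 ≤ i → i ≤ q - 1 → 1 ≤ wb i)
    (w : ℕ) (hw : w = ∑ i ∈ Finset.Icc 1 (q - 1), wb i) (hw1 : 1 ≤ w) :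
    (∀ C : Finset (Fin n → ZMod q),
      (∀ u ∈ C, wt u = w) →
      (∀ u ∈ C, ∀ i, 1 ≤ i → i ≤ q - 1 →
        (univ.filter (fun x => u x = (i : ZMod q))).card = wb i) →
      (∀ u ∈ C, ∀ v ∈ C, u ≠ v → 2 * w ≤ hdist u v) →
      C.card ≤ n / w) ∧
    (∃ C : Finset (Fin n → ZMod q),
      (∀ u ∈ C, wt u = w) ∧
      (∀ u ∈ C, ∀ i, 1 ≤ i → i ≤ q - 1 →
        (univ.filter (fun x => u x = (i : ZMod q))).card = wb i) ∧
      (∀ u ∈ C, ∀ v ∈ C, u ≠ v → 2 * w ≤ hdist u v) ∧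
      C.card = n / w) :=
  stmt5_general q n wb w hw hw1
end

section
/- Johnson-type bound for constant-composition codes: A_q(n,d,[w_1,...,w_{q-1}]) ≤ ⌊(n/w_1) · A_q(n-1,d,[w_1-1,w_2,...,w_{q-1}])⌋, where w_1 ≥ w_2 ≥ ... ≥ w_{q-1} > 0 and w_1 ≥ 1. -/
open Finset

/-- Maximum size of a `q`-ary code of length `n`, minimum distance `d` and
constant composition `wb` (for nonzero symbols `1, …, q-1`). -/
noncomputable def ACC (q n d : ℕ) (wb : ℕ → ℕ) : ℕ :=
  sSup {k : ℕ | ∃ C : Finset (Fin n → ZMod q),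
    (∀ u ∈ C, ∀ i, 1 ≤ i → i ≤ q - 1 →
      (univ.filter (fun x => u x = (i : ZMod q))).card = wb i) ∧
    (∀ u ∈ C, ∀ v ∈ C, u ≠ v → d ≤ hdist u v) ∧
    C.card = k}

/-! Double count the pairs (codeword, position where it has symbol 1). Each codeword lies in
exactly `w₁` of them. For a fixed position, the codewords with a 1 there, with that position
deleted, stay distinct and at the same mutual distance and have composition `[w₁ - 1, w₂, …]`,
so there are at most `A_q(n-1, d, [w₁ - 1, w₂, …])` of them. -/

lemma Fin.card_filter_univ_succAbove {n : ℕ} (x : Fin (n + 1)) (p : Fin (n + 1) → Prop)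
    [DecidablePred p] : #{y | p y} = ite (p x) 1 0 + #{j | p (x.succAbove j)} := by
  rw [Fin.univ_succAbove n x, filter_cons, apply_ite Finset.card, card_cons, filter_map, card_map]
  split_ifs <;> simp [add_comm] <;> rfl

lemma hdist_removeNth_of_apply_eq {n q : ℕ} {u v : Fin (n + 1) → ZMod q} {x : Fin (n + 1)}
    (h : u x = v x) : hdist (x.removeNth u) (x.removeNth v) = hdist u v := by
  rw [hdist, hdist, Fin.card_filter_univ_succAbove x, if_neg (not_not.2 h), zero_add]
  rfl

def IsConstCompCode (q n d : ℕ) (wb : ℕ → ℕ) (C : Finset (Fin n → ZMod q)) : Prop :=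
  (∀ u ∈ C, ∀ i, 1 ≤ i → i ≤ q - 1 → #{x | u x = (i : ZMod q)} = wb i) ∧
    ∀ u ∈ C, ∀ v ∈ C, u ≠ v → d ≤ hdist u v

section ACC

variable {q n d : ℕ} {wb : ℕ → ℕ}

lemma IsConstCompCode.card_le_ACC [NeZero q] {C : Finset (Fin n → ZMod q)}
    (hC : IsConstCompCode q n d wb C) : #C ≤ ACC q n d wb :=
  le_csSup ⟨Fintype.card (Fin n → ZMod q), by rintro _ ⟨D, -, -, rfl⟩; exact card_le_univ D⟩
    ⟨C, hC.1, hC.2, rfl⟩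

lemma ACC_le {k : ℕ} (h : ∀ C, IsConstCompCode q n d wb C → #C ≤ k) : ACC q n d wb ≤ k :=
  csSup_le ⟨0, ∅, by simp, by simp, rfl⟩ (by rintro _ ⟨C, h₁, h₂, rfl⟩; exact h C ⟨h₁, h₂⟩)

lemma natCast_ne_natCast_of_lt {i j : ℕ} (hi : i < q) (hj : j < q) (hij : i ≠ j) :
    (i : ZMod q) ≠ j := by
  rwa [Ne, ZMod.natCast_eq_natCast_iff', Nat.mod_eq_of_lt hi, Nat.mod_eq_of_lt hj]

lemma IsConstCompCode.shorten {C : Finset (Fin (n + 1) → ZMod q)}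
    (hC : IsConstCompCode q (n + 1) d wb C) (x : Fin (n + 1)) {i : ℕ} (hi : 1 ≤ i)
    (hiq : i ≤ q - 1) :
    IsConstCompCode q n d (Function.update wb i (wb i - 1))
      ({u ∈ C | u x = (i : ZMod q)}.image x.removeNth) := by
  simp only [IsConstCompCode, forall_mem_image, mem_filter, and_imp]
  refine ⟨fun u hu hux j hj hjq => ?_, fun u hu hux v hv hvx huv => ?_⟩
  · have hcount := Fin.card_filter_univ_succAbove x (fun y => u y = (j : ZMod q))
    rw [hC.1 u hu j hj hjq] at hcount
    rcases eq_or_ne j i with rfl | hji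
    · rw [if_pos hux] at hcount
      rw [Function.update_self]
      exact Nat.eq_sub_of_add_eq' hcount.symm
    · have : u x ≠ j := hux ▸ natCast_ne_natCast_of_lt (by omega) (by omega) hji.symm
      rw [if_neg this, zero_add] at hcount
      rw [Function.update_of_ne hji]
      exact hcount.symm
  · rw [hdist_removeNth_of_apply_eq (hux.trans hvx.symm)]
    exact hC.2 u hu v hv (fun h => huv (h ▸ rfl))

lemma IsConstCompCode.card_filter_apply_eq_le_ACC {C : Finset (Fin (n + 1) → ZMod q)}
    (hC : IsConstCompCode q (n + 1) d wb C) (x : Fin (n + 1)) {i : ℕ} (hi : 1 ≤ i)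
    (hiq : i ≤ q - 1) :
    #{u ∈ C | u x = (i : ZMod q)} ≤ ACC q n d (Function.update wb i (wb i - 1)) := by
  have : NeZero q := ⟨by omega⟩
  rw [← card_image_of_injOn (f := x.removeNth) fun u hu v hv huv => ?_]
  · exact (hC.shorten x hi hiq).card_le_ACC
  · rw [mem_coe, mem_filter] at hu hv
    rw [← Fin.insertNth_self_removeNth x u, ← Fin.insertNth_self_removeNth x v, huv, hu.2, hv.2]

end ACC

theorem stmt6_general (q n d : ℕ) (hq : 2 ≤ q) (wb : ℕ → ℕ)
    (hpos : ∀ i, 1 ≤ i → i ≤ q - 1 → 1 ≤ wb i) :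
    ACC q n d wb ≤ n * ACC q (n - 1) d (Function.update wb 1 (wb 1 - 1)) / wb 1 := by
  have hq1 : 1 ≤ q - 1 := by omega
  refine ACC_le fun C hC => ?_
  rw [Nat.le_div_iff_mul_le (hpos 1 le_rfl hq1)]
  refine (card_mul_le_card_mul (t := univ) (fun u x => u x = ((1 : ℕ) : ZMod q)) ?_ ?_).trans_eq
    (by rw [card_univ, Fintype.card_fin])
  · intro u hu
    exact (hC.1 u hu 1 le_rfl hq1).ge
  · intro x _
    obtain _ | n := n
    · exact x.elim0
    · exact hC.card_filter_apply_eq_le_ACC x le_rfl hq1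

theorem stmt6 (q n d : ℕ) (hq : 2 ≤ q) (wb : ℕ → ℕ)
    (hmono : ∀ i j, 1 ≤ i → i ≤ j → j ≤ q - 1 → wb j ≤ wb i)
    (hpos : ∀ i, 1 ≤ i → i ≤ q - 1 → 1 ≤ wb i) :
    ACC q n d wb ≤ n * ACC q (n - 1) d (Function.update wb 1 (wb 1 - 1)) / wb 1 :=
  stmt6_general q n d hq wb hpos
end

section
/- A_q(n,2w-2,w̄) ≤ ⌊(n/w_1) · ⌊(n-1)/(w-1)⌋⌋ where w̄ = [w_1,...,w_{q-1}] with w_1 ≥ ... ≥ w_{q-1} > 0, w = Σ w_i, and w ≥ 2. -/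
open Finset

/-!
Fix a nonzero symbol `a` and a coordinate `x`. Two codewords of weight `w` that both carry `a`
at `x` and share a further support position `y` agree at `x` and outside the union of their
supports, so they are at distance at most `2w - 3`. Hence in a code of distance `2w - 2` the
codewords with `a` at `x` have pairwise disjoint supports off `x`, and there are at most
`⌊(n-1)/(w-1)⌋` of them. Counting the pairs (codeword, position of `a`) in two ways then gives
`|C| · w_a ≤ n ⌊(n-1)/(w-1)⌋`.
-/

section ConstantWeightCode

variable {ι β : Type*} [Fintype ι] [DecidableEq ι] [DecidableEq β] [Zero β]

theorem hammingDist_add_three_le {u v : ι → β} {x y : ι} (hxy : x ≠ y)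
    (hux : u x ≠ 0) (huy : u y ≠ 0) (hvy : v y ≠ 0) (huvx : u x = v x) :
    hammingDist u v + 3 ≤ hammingNorm u + hammingNorm v := by
  set U : Finset ι := {i | u i ≠ 0}
  set V : Finset ι := {i | v i ≠ 0}
  have hdiff : ({i | u i ≠ v i} : Finset ι) ⊆ (U ∪ V).erase x := by
    intro i hi
    simp only [U, V, mem_erase, mem_union, mem_filter, mem_univ, true_and] at hi ⊢
    exact ⟨by rintro rfl; exact hi huvx, by by_contra! h; exact hi (h.1.trans h.2.symm)⟩
  have hinter : 2 ≤ #(U ∩ V) := by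
    rw [← card_pair hxy]
    exact card_le_card (by simp [insert_subset_iff, U, V, ← huvx, hux, huy, hvy])
  have hx : x ∈ U ∪ V := by simp [U, hux]
  have hunion := card_union_add_card_inter U V
  have hdist : hammingDist u v ≤ #(U ∪ V) - 1 := card_erase_of_mem hx ▸ card_le_card hdiff
  have hpos : 0 < #(U ∪ V) := card_pos.mpr ⟨x, hx⟩
  change hammingDist u v + 3 ≤ #U + #V
  omega

theorem disjoint_erase_support_of_apply_eq {u v : ι → β} {w : ℕ} (hu : hammingNorm u = w)
    (hv : hammingNorm v = w) (huv : 2 * w - 2 ≤ hammingDist u v) {x : ι} (hux : u x ≠ 0)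
    (huvx : u x = v x) :
    Disjoint (({i | u i ≠ 0} : Finset ι).erase x) (({i | v i ≠ 0} : Finset ι).erase x) := by
  rw [disjoint_left]
  intro y hyu hyv
  simp only [mem_erase, mem_filter, mem_univ, true_and] at hyu hyv
  have := hammingDist_add_three_le (Ne.symm hyu.1) hux hyu.2 hyv.2 huvx
  omega

variable {C : Finset (ι → β)} {w : ℕ}

theorem card_filter_apply_eq_mul_le (hweight : ∀ u ∈ C, hammingNorm u = w)
    (hdist : ∀ u ∈ C, ∀ v ∈ C, u ≠ v → 2 * w - 2 ≤ hammingDist u v) {a : β} (ha : a ≠ 0)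
    (x : ι) :
    #{u ∈ C | u x = a} * (w - 1) ≤ Fintype.card ι - 1 := by
  set D := {u ∈ C | u x = a}
  set S : (ι → β) → Finset ι := fun u => ({i | u i ≠ 0} : Finset ι).erase x
  have hD : ∀ u ∈ D, u ∈ C ∧ u x = a := fun u hu => mem_filter.mp hu
  have hS : ∀ u ∈ D, #(S u) = w - 1 := fun u hu => by
    rw [card_erase_of_mem (by simp [(hD u hu).2, ha])]
    exact congrArg (· - 1) (hweight u (hD u hu).1)
  have hdisj : (D : Set (ι → β)).PairwiseDisjoint S := fun u hu v hv huv =>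
    disjoint_erase_support_of_apply_eq (hweight u (hD u hu).1) (hweight v (hD v hv).1)
      (hdist u (hD u hu).1 v (hD v hv).1 huv) (by simp [(hD u hu).2, ha])
      ((hD u hu).2.trans (hD v hv).2.symm)
  calc #D * (w - 1) = #(D.biUnion S) := by
        rw [card_biUnion hdisj, sum_congr rfl hS, sum_const, smul_eq_mul]
    _ ≤ #(univ.erase x) := card_le_card fun i hi => by
        obtain ⟨u, -, hi⟩ := mem_biUnion.mp hi
        exact mem_erase.mpr ⟨(mem_erase.mp hi).1, mem_univ i⟩
    _ = Fintype.card ι - 1 := by rw [card_erase_of_mem (mem_univ x), card_univ]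

theorem card_mul_le_of_card_filter_eq (hweight : ∀ u ∈ C, hammingNorm u = w)
    (hdist : ∀ u ∈ C, ∀ v ∈ C, u ≠ v → 2 * w - 2 ≤ hammingDist u v) {a : β} (ha : a ≠ 0)
    (hw : 2 ≤ w) {m : ℕ} (hm : ∀ u ∈ C, #{x | u x = a} = m) :
    #C * m ≤ Fintype.card ι * ((Fintype.card ι - 1) / (w - 1)) := by
  have := card_mul_le_card_mul (fun (u : ι → β) x => u x = a) (s := C) (t := univ)
    (fun u hu => (hm u hu).ge) (n := (Fintype.card ι - 1) / (w - 1))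
    (fun x _ => (Nat.le_div_iff_mul_le (by omega)).mpr
      (card_filter_apply_eq_mul_le hweight hdist ha x))
  rwa [card_univ] at this

end ConstantWeightCode

theorem sum_Icc_card_filter_eq_hammingNorm {ι : Type*} [Fintype ι] {q : ℕ} [NeZero q]
    (u : ι → ZMod q) :
    ∑ i ∈ Icc 1 (q - 1), #{x | u x = (i : ZMod q)} = hammingNorm u := by
  rw [hammingNorm, card_eq_sum_card_fiberwise (f := u) (t := univ.erase 0)
    (fun x hx => by simpa using hx)]
  have hcast : ∀ i ∈ Icc 1 (q - 1), (i : ZMod q) ≠ 0 := fun i hi h => by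
    have := mem_Icc.mp hi
    have := Nat.le_of_dvd (by omega) ((ZMod.natCast_eq_zero_iff i q).mp h)
    omega
  refine sum_nbij' (fun i => (i : ZMod q)) ZMod.val (fun i hi => by simpa using hcast i hi)
    (fun a ha => ?_) (fun i hi => ZMod.val_cast_of_lt ?_) (fun a _ => ZMod.natCast_zmod_val a)
    (fun i hi => ?_)
  · have := ZMod.val_lt a
    have : a.val ≠ 0 := by simpa using (mem_erase.mp ha).1
    exact mem_Icc.mpr ⟨by omega, by omega⟩
  · have := mem_Icc.mp hi
    omega
  · rw [filter_filter]
    exact congrArg card (filter_congr fun x _ => ⟨fun h => ⟨h ▸ hcast i hi, h⟩, And.right⟩)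

theorem stmt9_general (q n : ℕ) (hq : 2 ≤ q) (wb : ℕ → ℕ)
    (hpos : ∀ i, 1 ≤ i → i ≤ q - 1 → 1 ≤ wb i)
    (w : ℕ) (hw : w = ∑ i ∈ Finset.Icc 1 (q - 1), wb i) (hw2 : 2 ≤ w) :
    ACC q n (2 * w - 2) wb ≤ n * ((n - 1) / (w - 1)) / wb 1 := by
  have : Fact (1 < q) := ⟨hq⟩
  have hq1 : 1 ≤ q - 1 := by omega
  refine csSup_le' ?_
  rintro _ ⟨C, hcomp, hC, rfl⟩
  have hweight : ∀ u ∈ C, hammingNorm u = w := fun u hu => by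
    rw [hw, ← sum_Icc_card_filter_eq_hammingNorm]
    exact sum_congr rfl fun i hi => hcomp u hu i (mem_Icc.mp hi).1 (mem_Icc.mp hi).2
  rw [Nat.le_div_iff_mul_le (hpos 1 le_rfl hq1)]
  simpa using card_mul_le_of_card_filter_eq hweight hC one_ne_zero hw2
    fun u hu => by simpa using hcomp u hu 1 le_rfl hq1

theorem stmt9 (q n : ℕ) (hq : 2 ≤ q) (wb : ℕ → ℕ)
    (hmono : ∀ i j, 1 ≤ i → i ≤ j → j ≤ q - 1 → wb j ≤ wb i)
    (hpos : ∀ i, 1 ≤ i → i ≤ q - 1 → 1 ≤ wb i)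
    (w : ℕ) (hw : w = ∑ i ∈ Finset.Icc 1 (q - 1), wb i) (hw2 : 2 ≤ w) :
    ACC q n (2 * w - 2) wb ≤ n * ((n - 1) / (w - 1)) / wb 1 :=
  stmt9_general q n hq wb hpos w hw hw2
end

section
/- Let w_1 ≥ w_2 ≥ ... ≥ w_{q-1} > 0, w = Σ w_i, and a = gcd(w_1, w). Then the vector (w_1(w-1)/a)·(1,1,...,1) ∈ ℤ^{2(q-1)} is a nonnegative integral linear combination of the degree vectors of the edge-colored digraph family G(w̄); moreover α(G(w̄)) = w_1(w-1)/a, i.e., w_1(w-1)/a divides every integer t such that (t,...,t) is a nonnegative integral combination of the degree vectors. -/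
open Finset

/-- Vertex set of the edge-colored digraph `G(w̄)`: class `i` has `w i` vertices. -/
def Vtx (k : ℕ) (w : Fin k → ℕ) : Type := Σ i : Fin k, Fin (w i)

instance (k : ℕ) (w : Fin k → ℕ) : Fintype (Vtx k w) := by unfold Vtx; infer_instance
instance (k : ℕ) (w : Fin k → ℕ) : DecidableEq (Vtx k w) := by unfold Vtx; infer_instance

/-- In `G(w̄)` there is an edge of color `c` from `u` to `v` (for `u ≠ v`) iff `u`
lies in class `c`.  The indegree of `v` with respect to color `c`. -/
def indeg (k : ℕ) (w : Fin k → ℕ) (c : Fin k) (v : Vtx k w) : ℕ :=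
  (univ.filter (fun u : Vtx k w => u ≠ v ∧ u.1 = c)).card

/-- The outdegree of `v` with respect to color `c` in `G(w̄)`. -/
def outdeg (k : ℕ) (w : Fin k → ℕ) (c : Fin k) (v : Vtx k w) : ℕ :=
  (univ.filter (fun u : Vtx k w => u ≠ v ∧ v.1 = c)).card

/-- `(t, t, …, t) ∈ ℤ^{2k}` is a nonnegative integral combination of the degree
vectors of the family `𝒢(w̄)`, consisting of `G(w̄)` together with the single-edge
digraphs `G_i` (one edge of color `i`, contributing the degree vectors of its two
endpoints) for each `i` with `w i < w1`. -/
def IsComboConst (k : ℕ) (w : Fin k → ℕ) (w1 t : ℕ) : Prop :=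
  ∃ (f : Vtx k w → ℕ) (gin gout : Fin k → ℕ),
    (∀ i, ¬ w i < w1 → gin i = 0 ∧ gout i = 0) ∧
    (∀ c, (∑ v : Vtx k w, f v * indeg k w c v) + gin c = t) ∧
    (∀ c, (∑ v : Vtx k w, f v * outdeg k w c v) + gout c = t)


/-!
Write `W = ∑ wᵢ`. In color `c`, a vertex of class `i` has in-degree `w_c - [i = c]` and
out-degree `(W - 1) [i = c]`, so a vertex weighting `f` contributes `F w_c - x_c` to the in-degree
and `x_c (W - 1)` to the out-degree of color `c`, where `F` is the total weight and `x_c` the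
weight of class `c`; the single-edge digraphs top up only the colors with `w_c < w₁`.

For a color with `w_c = w₁` both equations are tight, so `F w₁ = x_c W`; hence `w₁ / a ∣ x_c`
and `w₁ (W - 1) / a ∣ x_c (W - 1) = t`. Conversely, with `p = w₁ / a` and `s = W / a`, spread
total weight `s` greedily over the classes, at most `p` per class. Since `w` is antitone the
classes with `w_c = w₁` come first, so they receive exactly `p`, and every color can be
completed to `t = p (W - 1)`.
-/

section Degrees

variable {k : ℕ} {w : Fin k → ℕ}

theorem sum_vtx {M : Type*} [AddCommMonoid M] (g : Vtx k w → M) :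
    ∑ v, g v = ∑ i, ∑ j, g ⟨i, j⟩ :=
  Fintype.sum_sigma g

theorem card_vtx : Fintype.card (Vtx k w) = ∑ i, w i := by
  simp [Vtx, Fintype.card_sigma]

theorem card_filter_fst_eq (c : Fin k) : #{u : Vtx k w | u.1 = c} = w c := by
  rw [card_filter, sum_vtx, Finset.sum_eq_single c] <;> simp +contextual

theorem indeg_add_ite (c : Fin k) (v : Vtx k w) :
    indeg k w c v + (if v.1 = c then 1 else 0) = w c := by
  have : ({u | u ≠ v ∧ u.1 = c} : Finset (Vtx k w)) = ({u | u.1 = c} : Finset _).erase v := by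
    ext u; simp [and_comm]
  rw [indeg, this, ← card_filter_fst_eq (w := w) c]
  split_ifs with hv
  · exact card_erase_add_one (by simp [hv])
  · rw [erase_eq_of_notMem (by simp [hv]), add_zero]

theorem outdeg_eq (c : Fin k) (v : Vtx k w) :
    outdeg k w c v = if v.1 = c then ∑ i, w i - 1 else 0 := by
  split_ifs with hv
  · have : ({u | u ≠ v ∧ v.1 = c} : Finset (Vtx k w)) = univ.erase v := by ext u; simp [hv]
    rw [outdeg, this, card_erase_of_mem (mem_univ v), card_univ, card_vtx]
  · simp [outdeg, hv]

def classSum (f : Vtx k w → ℕ) (c : Fin k) : ℕ := ∑ j : Fin (w c), f ⟨c, j⟩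

theorem classSum_eq_sum_ite (f : Vtx k w → ℕ) (c : Fin k) :
    classSum f c = ∑ v, f v * (if v.1 = c then 1 else 0) := by
  rw [sum_vtx, Finset.sum_eq_single c] <;> simp +contextual [classSum]

theorem sum_classSum (f : Vtx k w → ℕ) : ∑ c, classSum f c = ∑ v, f v :=
  (sum_vtx f).symm

theorem sum_mul_indeg_add_classSum (f : Vtx k w → ℕ) (c : Fin k) :
    ∑ v, f v * indeg k w c v + classSum f c = (∑ v, f v) * w c := by
  simp_rw [classSum_eq_sum_ite, ← sum_add_distrib, ← mul_add, indeg_add_ite, sum_mul]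

theorem sum_mul_outdeg (f : Vtx k w → ℕ) (c : Fin k) :
    ∑ v, f v * outdeg k w c v = classSum f c * (∑ i, w i - 1) := by
  rw [classSum_eq_sum_ite, sum_mul]
  refine sum_congr rfl fun v _ => ?_
  rw [outdeg_eq]
  split_ifs <;> simp

theorem exists_classSum_eq (hpos : ∀ i, 0 < w i) (x : Fin k → ℕ) :
    ∃ f : Vtx k w → ℕ, classSum f = x := by
  refine ⟨fun v => if (v.2 : ℕ) = 0 then x v.1 else 0, funext fun c => ?_⟩
  rw [classSum, Finset.sum_eq_single ⟨0, hpos c⟩] <;> simp +contextual [Fin.ext_iff]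

end Degrees

theorem sum_range_min_sub_mul (p s n : ℕ) :
    ∑ i ∈ range n, min p (s - p * i) = min s (p * n) := by
  induction n with
  | zero => simp
  | succ n ih =>
    rw [sum_range_succ, ih, mul_add_one]
    omega

theorem exists_sum_eq_of_le_mul {p s k : ℕ} (hs : s ≤ p * k) :
    ∃ x : Fin k → ℕ, ∑ i, x i = s ∧ (∀ i, x i ≤ p) ∧ ∀ i : Fin k, p * (i + 1) ≤ s → x i = p := by
  refine ⟨fun i => min p (s - p * i), ?_, fun i => min_le_left _ _, fun i hi => ?_⟩
  · rw [Fin.sum_univ_eq_sum_range (fun i => min p (s - p * i)), sum_range_min_sub_mul]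
    exact min_eq_left hs
  · rw [mul_add_one] at hi
    exact min_eq_left (by omega)

theorem Antitone.succ_mul_le_sum {k : ℕ} {w : Fin k → ℕ} (hw : Antitone w) (c : Fin k) :
    ((c : ℕ) + 1) * w c ≤ ∑ i, w i :=
  calc ((c : ℕ) + 1) * w c = ∑ _i ∈ Iic c, w c := by rw [sum_const, Fin.card_Iic, smul_eq_mul]
    _ ≤ ∑ i ∈ Iic c, w i := sum_le_sum fun i hi => hw (mem_Iic.mp hi)
    _ ≤ ∑ i, w i := sum_le_sum_of_subset (subset_univ _)

theorem Nat.div_gcd_dvd_of_mul_eq_mul {m n a b : ℕ} (hm : 0 < m) (h : m * a = n * b) :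
    m / Nat.gcd m n ∣ b := by
  rw [Nat.div_dvd_iff_dvd_mul (Nat.gcd_dvd_left m n) (Nat.gcd_pos_of_pos_left n hm),
    Nat.dvd_gcd_mul_iff_dvd_mul]
  exact ⟨a, h.symm⟩

section Combinations

variable {k : ℕ} {w : Fin k → ℕ} {w1 t : ℕ}

theorem isComboConst_of_classSums (hpos : ∀ i, 0 < w i) (x : Fin k → ℕ)
    (hout : ∀ c, x c * (∑ i, w i - 1) ≤ t) (hin : ∀ c, (∑ i, x i) * w c ≤ t + x c)
    (hfull : ∀ c, ¬ w c < w1 → x c * (∑ i, w i - 1) = t ∧ (∑ i, x i) * w c = t + x c) :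
    IsComboConst k w w1 t := by
  obtain ⟨f, rfl⟩ := exists_classSum_eq hpos x
  rw [sum_classSum] at hin hfull
  refine ⟨f, fun c => t + classSum f c - (∑ v, f v) * w c,
    fun c => t - classSum f c * (∑ i, w i - 1), fun c hc => ?_, fun c => ?_, fun c => ?_⟩ <;>
    dsimp only
  · have := hfull c hc
    omega
  · have := sum_mul_indeg_add_classSum f c
    have := hin c
    omega
  · rw [sum_mul_outdeg]
    have := hout c
    omega

theorem IsComboConst.div_gcd_mul_dvd (h : IsComboConst k w w1 t) {c : Fin k} (hc0 : 0 < w c)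
    (hc : ¬ w c < w1) : w c / Nat.gcd (w c) (∑ i, w i) * (∑ i, w i - 1) ∣ t := by
  obtain ⟨f, gin, gout, hg, hin, hout⟩ := h
  have hW : w c ≤ ∑ i, w i := single_le_sum (fun i _ => Nat.zero_le (w i)) (mem_univ c)
  have hin := hin c
  have hout := hout c
  rw [(hg c hc).1, add_zero] at hin
  rw [(hg c hc).2, add_zero, sum_mul_outdeg] at hout
  have key : w c * ∑ v, f v = (∑ i, w i) * classSum f c := by
    have := sum_mul_indeg_add_classSum f c
    obtain ⟨b, hb⟩ : ∃ b, ∑ i, w i = b + 1 :=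
      ⟨_, (Nat.succ_pred_eq_of_pos (hc0.trans_le hW)).symm⟩
    rw [hb, Nat.add_sub_cancel] at hout
    rw [hb]
    nlinarith
  rw [← hout]
  exact mul_dvd_mul_right (Nat.div_gcd_dvd_of_mul_eq_mul hc0 key) _

theorem isComboConst_mul_pred (hk : 0 < k) (hpos : ∀ i, 0 < w i) (hanti : Antitone w) {p s : ℕ}
    (hps : p * ∑ i, w i = s * w ⟨0, hk⟩) :
    IsComboConst k w (w ⟨0, hk⟩) (p * (∑ i, w i - 1)) := by
  set w1 := w ⟨0, hk⟩
  have hw1 : 0 < w1 := hpos _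
  have hle : ∀ c, w c ≤ w1 := fun c => hanti (Nat.zero_le (c : ℕ))
  have hW1 : w1 ≤ ∑ i, w i := single_le_sum (fun i _ => Nat.zero_le (w i)) (mem_univ _)
  have hW_le : ∑ i, w i ≤ k * w1 := by simpa using sum_le_sum fun c (_ : c ∈ univ) => hle c
  have hp_le_s : p ≤ s := Nat.le_of_mul_le_mul_right (by nlinarith) hw1
  have hs_le : s ≤ p * k := Nat.le_of_mul_le_mul_right (by nlinarith) hw1
  obtain ⟨x, hxs, hxp, hxfull⟩ := exists_sum_eq_of_le_mul hs_le
  have hfull : ∀ c, ¬ w c < w1 → w c = w1 ∧ x c = p := fun c hc => by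
    have hc : w c = w1 := le_antisymm (hle c) (not_lt.mp hc)
    have := Nat.mul_le_mul_left p (hanti.succ_mul_le_sum c)
    exact ⟨hc, hxfull c (Nat.le_of_mul_le_mul_right (by rw [hc] at this; nlinarith) hw1)⟩
  obtain ⟨b, hb⟩ : ∃ b, ∑ i, w i = b + 1 :=
    ⟨_, (Nat.succ_pred_eq_of_pos (hw1.trans_le hW1)).symm⟩
  rw [hb] at hps
  refine isComboConst_of_classSums hpos x (fun c => Nat.mul_le_mul_right _ (hxp c))
    (fun c => ?_) (fun c hc => ?_) <;> rw [hxs, hb, Nat.add_sub_cancel]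
  · rcases (hle c).lt_or_eq with hc | hc
    · nlinarith
    · rw [hc, (hfull c hc.not_lt).2]
      linarith
  · rw [(hfull c hc).1, (hfull c hc).2]
    exact ⟨rfl, by linarith⟩

end Combinations

theorem stmt13 (k : ℕ) (hk : 0 < k) (w : Fin k → ℕ)
    (hpos : ∀ i, 0 < w i) (hmono : ∀ i j : Fin k, i ≤ j → w j ≤ w i) :
    IsComboConst k w (w ⟨0, hk⟩)
      (w ⟨0, hk⟩ * (∑ i, w i - 1) / Nat.gcd (w ⟨0, hk⟩) (∑ i, w i)) ∧
    ∀ t, IsComboConst k w (w ⟨0, hk⟩) t →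
      (w ⟨0, hk⟩ * (∑ i, w i - 1) / Nat.gcd (w ⟨0, hk⟩) (∑ i, w i)) ∣ t := by
  set W := ∑ i, w i
  set w1 := w ⟨0, hk⟩
  have ha := Nat.gcd_dvd_left w1 W
  rw [Nat.mul_div_right_comm ha]
  refine ⟨isComboConst_mul_pred hk hpos (fun i j h => hmono i j h) (s := W / Nat.gcd w1 W) ?_,
    fun t ht => ht.div_gcd_mul_dvd (hpos _) (lt_irrefl _)⟩
  rw [← Nat.mul_div_right_comm ha, mul_comm, Nat.mul_div_right_comm (Nat.gcd_dvd_right w1 W)]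
end

section
/- Let X_1,...,X_{q-1} be rationals such that w(w-1)·X_i ∈ ℤ for each i and (w-1)²·X_i + (w-1)·X_j ∈ ℤ for all i ≠ j. If (w-1) ∣ (n-1) and w(w-1) ∣ (q-1)n(n-1), then n(n-1)·Σ_{i=1}^{q-1} X_i ∈ ℤ. -/
open Finset

theorem stmt17 (q n w : ℕ) (X : Fin (q - 1) → ℚ)
    (h1 : ∀ i, ∃ z : ℤ, ((w : ℚ) * ((w : ℚ) - 1)) * X i = z)
    (h2 : ∀ i j, i ≠ j →
      ∃ z : ℤ, ((w : ℚ) - 1) ^ 2 * X i + ((w : ℚ) - 1) * X j = z)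
    (hd1 : ((w : ℤ) - 1) ∣ ((n : ℤ) - 1))
    (hd2 : ((w : ℤ) * ((w : ℤ) - 1)) ∣ (((q : ℤ) - 1) * n * ((n : ℤ) - 1))) :
    ∃ z : ℤ, ((n : ℚ) * ((n : ℚ) - 1)) * (∑ i, X i) = z := by
  rcases Nat.eq_zero_or_pos (q - 1) with hq | hq
  · refine ⟨0, ?_⟩
    have he : IsEmpty (Fin (q - 1)) := by rw [hq]; infer_instance
    simp
  obtain ⟨k, hk⟩ := hd1
  obtain ⟨m, hm⟩ := hd2
  have hkQ : (n : ℚ) - 1 = ((w : ℚ) - 1) * k := by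
    have := congrArg (fun x : ℤ => (x : ℚ)) hk
    push_cast at this
    linarith
  have hmQ : ((q : ℚ) - 1) * n * ((n : ℚ) - 1) = (w : ℚ) * ((w : ℚ) - 1) * m := by
    have := congrArg (fun x : ℤ => (x : ℚ)) hm
    push_cast at this
    linarith
  have step2 : ∀ i j : Fin (q - 1), ∃ z : ℤ,
      (n : ℚ) * ((n : ℚ) - 1) * X i - (n : ℚ) * ((n : ℚ) - 1) * X j = z := by
    intro i j
    by_cases hij : i = j
    · exact ⟨0, by simp [hij]⟩
    · obtain ⟨z1, hz1⟩ := h1 i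
      obtain ⟨z2, hz2⟩ := h2 i j hij
      refine ⟨n * k * (z1 - z2), ?_⟩
      push_cast
      linear_combination ((n : ℚ) * k) * (hz1 - hz2) + ((n : ℚ) * (X i - X j)) * hkQ
  set i0 : Fin (q - 1) := ⟨0, hq⟩
  choose f hf using fun i => step2 i i0
  obtain ⟨z0, hz0⟩ := h1 i0
  refine ⟨(∑ i, f i) + m * z0, ?_⟩
  have hs : ∑ i, ((n : ℚ) * ((n : ℚ) - 1) * X i - (n : ℚ) * ((n : ℚ) - 1) * X i0)
      = ((∑ i, f i : ℤ) : ℚ) := by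
    push_cast
    exact Finset.sum_congr rfl fun i _ => hf i
  have hcard : ((q - 1 : ℕ) : ℚ) = (q : ℚ) - 1 := by
    have h1q : 1 ≤ q := by omega
    push_cast [Nat.cast_sub h1q]
    ring
  have expand : (n : ℚ) * ((n : ℚ) - 1) * ∑ i, X i =
      (∑ i, ((n : ℚ) * ((n : ℚ) - 1) * X i - (n : ℚ) * ((n : ℚ) - 1) * X i0))
        + ((q - 1 : ℕ) : ℚ) * ((n : ℚ) * ((n : ℚ) - 1) * X i0) := by
    rw [Finset.sum_sub_distrib, Finset.sum_const, Finset.card_univ, Fintype.card_fin,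
      nsmul_eq_mul, Finset.mul_sum]
    ring
  rw [expand, hs, hcard]
  push_cast
  linear_combination (m : ℚ) * hz0 + (X i0) * hmQ
end

section
/- Duality criterion for integral solvability: for a rational m × n matrix M and rational vector c of length m, the system Mx = c has an integral solution x ∈ ℤⁿ if and only if for every rational row vector y of length m, yᵀc ∈ ℤ whenever yᵀM has all integer entries. -/
/-!
The ℤ-span `L` of the columns of `M` is a finitely generated torsion-free ℤ-module, hence free,
and a ℤ-basis `u` of `L` is ℚ-linearly independent. Suppose every ℚ-linear functional that is
integral on `L` is integral at `c`. Then `c` lies in the ℚ-span of `u`, since otherwise some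
functional vanishes on `L` but takes the value `1/2` at `c`. The coordinates of `c` with respect
to `u` are integers, since the coordinate functionals are integral on `L`. So `c ∈ L`.
-/

open Matrix

variable {V : Type*} [AddCommGroup V] [Module ℚ V]

theorem Submodule.mem_of_forall_dual_le_ker_exists_int {W : Submodule ℚ V} {c : V}
    (h : ∀ φ : Module.Dual ℚ V, W ≤ LinearMap.ker φ → ∃ z : ℤ, φ c = z) : c ∈ W := by
  by_contra hc
  obtain ⟨φ, hφc, hWφ⟩ := W.exists_le_ker_of_notMem hc
  obtain ⟨z, hz⟩ := h ((2 * φ c)⁻¹ • φ) fun w hw => by simp [LinearMap.mem_ker.mp (hWφ hw)]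
  have h2zq : (2 * z : ℚ) = 1 := by
    rw [← hz, LinearMap.smul_apply, smul_eq_mul]; field_simp
  have h2z : 2 * z = 1 := by exact_mod_cast h2zq
  omega

theorem exists_int_apply_eq_of_mem_span_int {ι : Type*} {u : ι → V} (φ : Module.Dual ℚ V)
    (hu : ∀ i, ∃ z : ℤ, φ (u i) = z) {w : V} (hw : w ∈ Submodule.span ℤ (Set.range u)) :
    ∃ z : ℤ, φ w = z := by
  induction hw using Submodule.span_induction with
  | mem x hx => obtain ⟨i, rfl⟩ := hx; exact hu i
  | zero => exact ⟨0, by simp⟩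
  | add x y _ _ hx hy =>
    obtain ⟨a, ha⟩ := hx; obtain ⟨b, hb⟩ := hy; exact ⟨a + b, by simp [ha, hb]⟩
  | smul n x _ hx => obtain ⟨a, ha⟩ := hx; exact ⟨n * a, by simp [ha]⟩

theorem LinearIndependent.exists_dual_apply_eq_single {ι : Type*} [DecidableEq ι] {u : ι → V}
    (hu : LinearIndependent ℚ u) (i : ι) :
    ∃ f : Module.Dual ℚ V, ∀ j, f (u j) = (Pi.single i 1 : ι → ℚ) j := by
  obtain ⟨f, hf⟩ := LinearMap.exists_extend ((Module.Basis.span hu).coord i)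
  refine ⟨f, fun j => ?_⟩
  calc f (u j) = (f ∘ₗ (Submodule.span ℚ (Set.range u)).subtype) (Module.Basis.span hu j) := by
        rw [LinearMap.comp_apply, Submodule.subtype_apply, Module.Basis.span_apply]
    _ = _ := by
        rw [hf, Module.Basis.coord_apply, Module.Basis.repr_self, Finsupp.single_apply,
          Pi.single_apply, eq_comm]

theorem mem_span_int_of_forall_dual_exists_int {ι : Type*} [Finite ι] (v : ι → V) (c : V)
    (h : ∀ φ : Module.Dual ℚ V, (∀ i, ∃ z : ℤ, φ (v i) = z) → ∃ z : ℤ, φ c = z) :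
    c ∈ Submodule.span ℤ (Set.range v) := by
  classical
  have : IsAddTorsionFree V := .of_module_rat V
  set L := Submodule.span ℤ (Set.range v)
  have : Module.Finite ℤ L := Module.Finite.iff_fg.mpr (Submodule.fg_span (Set.finite_range v))
  let b := Module.Free.chooseBasis ℤ L
  let u := L.subtype ∘ b
  have hL : Submodule.span ℤ (Set.range u) = L := by
    rw [Set.range_comp, ← Submodule.map_span, b.span_eq, Submodule.map_top, Submodule.range_subtype]
  have hu : LinearIndependent ℚ u :=
    (LinearIndependent.iff_fractionRing ℤ ℚ).mp (b.linearIndependent.map' L.subtype L.ker_subtype)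
  have hv : ∀ i, v i ∈ Submodule.span ℤ (Set.range u) :=
    fun i => hL.ge (Submodule.subset_span (Set.mem_range_self i))
  have hcW : c ∈ Submodule.span ℚ (Set.range u) := by
    refine Submodule.mem_of_forall_dual_le_ker_exists_int fun φ hφ => h φ fun i => ⟨0, ?_⟩
    exact_mod_cast hφ (Submodule.span_le_restrictScalars ℤ ℚ _ (hv i))
  obtain ⟨a, rfl⟩ := (Submodule.mem_span_range_iff_exists_fun ℚ).mp hcW
  have ha : ∀ k, ∃ z : ℤ, a k = z := by
    intro k
    obtain ⟨f, hf⟩ := hu.exists_dual_apply_eq_single k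
    obtain ⟨z, hz⟩ := h f fun i => exists_int_apply_eq_of_mem_span_int f
      (fun l => ⟨(Pi.single k 1 : _ → ℤ) l, by simp [hf, Pi.single_apply]⟩) (hv i)
    exact ⟨z, by simpa [hf, Pi.single_apply] using hz⟩
  choose z hz using ha
  simp_rw [hz, Int.cast_smul_eq_zsmul]
  exact hL.le ((Submodule.mem_span_range_iff_exists_fun ℤ).mpr ⟨z, rfl⟩)

/-- Integer Farkas-type duality (Schrijver): a rational linear system `M x = c`
has an integral solution iff `yᵀc` is an integer whenever `yᵀM` is integral. -/
theorem stmt18 (m n : ℕ) (M : Matrix (Fin m) (Fin n) ℚ) (c : Fin m → ℚ) :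
    (∃ x : Fin n → ℤ, M.mulVec (fun j => (x j : ℚ)) = c) ↔
      ∀ y : Fin m → ℚ, (∀ j, ∃ z : ℤ, Matrix.vecMul y M j = z) →
        ∃ z : ℤ, y ⬝ᵥ c = z := by
  have hcol : ∀ x : Fin n → ℤ, M *ᵥ (fun j => (x j : ℚ)) = ∑ j, x j • Mᵀ j := by
    intro x; ext i; simp [mulVec, dotProduct, mul_comm]
  constructor
  · rintro ⟨x, rfl⟩ y hy
    choose z hz using hy
    refine ⟨z ⬝ᵥ x, ?_⟩
    rw [dotProduct_mulVec, funext hz]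
    simp [dotProduct]
  · intro H
    have hc : c ∈ Submodule.span ℤ (Set.range Mᵀ) := by
      refine mem_span_int_of_forall_dual_exists_int _ c fun φ hφ => ?_
      obtain ⟨y, rfl⟩ := (dotProductEquiv ℚ (Fin m)).surjective φ
      exact H y hφ
    obtain ⟨x, hx⟩ := (Submodule.mem_span_range_iff_exists_fun ℤ).mp hc
    exact ⟨x, by rw [hcol, hx]⟩
end
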